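/- Let G be a group, H a subgroup of index 2, and let ψ and φ be one-dimensional characters of H over a field of characteristic zero. Let ψ' denote the conjugate character ψ'(σ) = ψ(σ₀σσ₀⁻¹) for any fixed σ₀ ∈ G \ H. Then the tensor product of induced representations Ind_H^G(ψ) ⊗ Ind_H^G(φ) is isomorphic to Ind_H^G(ψφ) ⊕ Ind_H^G(ψφ'). -/

import Mathlib

open scoped TensorProduct

/-- The underlying space of the induced representation `Ind_H^G ψ` of a one-dimensional
character `ψ` of `H`: functions `f : G → k` with `f(hg) = ψ(h)·f(g)` for `h ∈ H`. -/
def IndSpace {k G : Type*} [Field k] [Group G] (H : Subgroup G) (ψ : H →* kˣ) :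
    Submodule k (G → k) where
  carrier := {f | ∀ (h : H) (g : G), f (↑h * g) = (ψ h : k) * f g}
  add_mem' := by
    intro a b ha hb h g
    simp only [Pi.add_apply, ha h g, hb h g, mul_add]
  zero_mem' := by intro h g; simp
  smul_mem' := by
    intro c a ha h g
    simp only [Pi.smul_apply, smul_eq_mul, ha h g]
    ring

/-- The induced representation `Ind_H^G ψ`, with `G` acting by right translation. -/
def IndRep {k G : Type*} [Field k] [Group G] (H : Subgroup G) (ψ : H →* kˣ) :
    Representation k G (IndSpace H ψ) where
  toFun g :=
    { toFun := fun f => ⟨fun x => (f : G → k) (x * g), fun h x => by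
        simpa [mul_assoc] using f.2 h (x * g)⟩
      map_add' := fun a b => rfl
      map_smul' := fun c a => rfl }
  map_one' := by
    ext f x
    simp
  map_mul' g₁ g₂ := by
    ext f x
    simp [mul_assoc]

/-! Since `H` has index two, an element `f` of `Ind χ` is determined by its values `f 1` and
`f σ₀`. The map `f ⊗ f' ↦ (x ↦ f x * f' x, x ↦ f x * f' (σ₀ * x))` lands in `Ind(ψφ) × Ind(ψφ')`,
because left translation by `σ₀` carries `Ind φ` to `Ind φ'`, and it is `G`-equivariant because
`G` acts by right translation. In these coordinates it sends the four products `f a * f' b`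
(`a, b ∈ {1, σ₀}`) to the four coordinates of the target, up to the unit `φ (σ₀ * σ₀)`, so its
inverse can be written down. -/

theorem Subgroup.mul_inv_mem_of_notMem_of_index_two {G : Type*} [Group G] {H : Subgroup G}
    (hH : H.index = 2) {σ₀ x : G} (hσ₀ : σ₀ ∉ H) (hx : x ∉ H) : x * σ₀⁻¹ ∈ H := by
  rw [Subgroup.mul_mem_iff_of_index_two hH]
  simp [hx, hσ₀]

namespace IndSpace

variable {k G : Type*} [Field k] [Group G] {H : Subgroup G} {ψ : H →* kˣ}

theorem apply_of_mem (f : IndSpace H ψ) {x : G} (hx : x ∈ H) :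
    (f : G → k) x = ψ ⟨x, hx⟩ * (f : G → k) 1 := by
  simpa using f.2 ⟨x, hx⟩ 1

theorem apply_of_mul_inv_mem (f : IndSpace H ψ) {x σ₀ : G} (hx : x * σ₀⁻¹ ∈ H) :
    (f : G → k) x = ψ ⟨x * σ₀⁻¹, hx⟩ * (f : G → k) σ₀ := by
  simpa using f.2 ⟨x * σ₀⁻¹, hx⟩ σ₀

theorem ext_of_index_two (hH : H.index = 2) {σ₀ : G} (hσ₀ : σ₀ ∉ H) {f f' : IndSpace H ψ}
    (h₁ : (f : G → k) 1 = (f' : G → k) 1) (hσ : (f : G → k) σ₀ = (f' : G → k) σ₀) :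
    f = f' := by
  ext x
  by_cases hx : x ∈ H
  · rw [apply_of_mem f hx, apply_of_mem f' hx, h₁]
  · have hx' := H.mul_inv_mem_of_notMem_of_index_two hH hσ₀ hx
    rw [apply_of_mul_inv_mem f hx', apply_of_mul_inv_mem f' hx', hσ]

variable (ψ) in
open scoped Classical in
noncomputable def ofValues (hH : H.index = 2) {σ₀ : G} (hσ₀ : σ₀ ∉ H) (a b : k) :
    IndSpace H ψ :=
  ⟨fun x => if hx : x ∈ H then ψ ⟨x, hx⟩ * a
    else ψ ⟨x * σ₀⁻¹, H.mul_inv_mem_of_notMem_of_index_two hH hσ₀ hx⟩ * b, by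
    intro h x
    by_cases hx : x ∈ H
    · have hhx : (h : G) * x ∈ H := H.mul_mem h.2 hx
      have : (⟨h * x, hhx⟩ : H) = h * ⟨x, hx⟩ := rfl
      simp only [hx, hhx, dite_true, this, map_mul, Units.val_mul, mul_assoc]
    · have hhx : (h : G) * x ∉ H := by simpa [H.mul_mem_cancel_left h.2] using hx
      have : (⟨h * x * σ₀⁻¹, H.mul_inv_mem_of_notMem_of_index_two hH hσ₀ hhx⟩ : H) =
          h * ⟨x * σ₀⁻¹, H.mul_inv_mem_of_notMem_of_index_two hH hσ₀ hx⟩ := by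
        ext; simp [mul_assoc]
      dsimp only
      rw [dif_neg hx, dif_neg hhx, this, map_mul, Units.val_mul, mul_assoc]⟩

theorem ofValues_apply_one (hH : H.index = 2) {σ₀ : G} (hσ₀ : σ₀ ∉ H) (a b : k) :
    (ofValues ψ hH hσ₀ a b : G → k) 1 = a := by
  simp [ofValues, H.one_mem, (H.mk_eq_one).mpr rfl]

theorem ofValues_apply_self (hH : H.index = 2) {σ₀ : G} (hσ₀ : σ₀ ∉ H) (a b : k) :
    (ofValues ψ hH hσ₀ a b : G → k) σ₀ = b := by
  simp [ofValues, hσ₀, (H.mk_eq_one).mpr rfl]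

theorem eq_ofValues_add (hH : H.index = 2) {σ₀ : G} (hσ₀ : σ₀ ∉ H) (f : IndSpace H ψ) :
    f = (f : G → k) 1 • ofValues ψ hH hσ₀ 1 0 + (f : G → k) σ₀ • ofValues ψ hH hσ₀ 0 1 :=
  ext_of_index_two hH hσ₀ (by simp [ofValues_apply_one]) (by simp [ofValues_apply_self])

theorem apply_mul_self (hH : H.index = 2) (σ₀ : G) (f : IndSpace H ψ) :
    (f : G → k) (σ₀ * σ₀) = ψ ⟨σ₀ * σ₀, H.mul_self_mem_of_index_two hH σ₀⟩ * (f : G → k) 1 :=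
  apply_of_mem f _

variable (ψ) in
def evalₗ (x : G) : IndSpace H ψ →ₗ[k] k :=
  (LinearMap.proj x).comp (IndSpace H ψ).subtype

@[simp]
theorem evalₗ_apply (x : G) (f : IndSpace H ψ) : evalₗ ψ x f = (f : G → k) x :=
  rfl

variable (ψ) in
def mulₗ (φ : H →* kˣ) : IndSpace H ψ →ₗ[k] IndSpace H φ →ₗ[k] IndSpace H (ψ * φ) :=
  LinearMap.mk₂ k
    (fun f g => ⟨fun x => (f : G → k) x * (g : G → k) x, fun h x => by
      simp only [f.2 h x, g.2 h x, MonoidHom.mul_apply, Units.val_mul]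
      ring⟩)
    (fun _ _ _ => Subtype.ext <| funext fun _ => add_mul _ _ _)
    (fun _ _ _ => Subtype.ext <| funext fun _ => mul_assoc _ _ _)
    (fun _ _ _ => Subtype.ext <| funext fun _ => mul_add _ _ _)
    (fun _ _ _ => Subtype.ext <| funext fun _ => mul_left_comm _ _ _)

@[simp]
theorem coe_mulₗ {φ : H →* kˣ} (f : IndSpace H ψ) (f' : IndSpace H φ) (x : G) :
    (mulₗ ψ φ f f' : G → k) x = (f : G → k) x * (f' : G → k) x :=
  rfl

def translate (hH : H.index = 2) (σ₀ : G) {ψ' : H →* kˣ}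
    (hψ' : ∀ h h' : H, (h' : G) = σ₀ * h * σ₀⁻¹ → ψ' h = ψ h') :
    IndSpace H ψ →ₗ[k] IndSpace H ψ' where
  toFun f := ⟨fun x => (f : G → k) (σ₀ * x), fun h x => by
    have hconj := (H.normal_of_index_eq_two hH).conj_mem h h.2 σ₀
    rw [hψ' h ⟨_, hconj⟩ rfl, ← f.2 ⟨_, hconj⟩]
    simp [mul_assoc]⟩
  map_add' _ _ := rfl
  map_smul' _ _ := rfl

@[simp]
theorem coe_translate (hH : H.index = 2) (σ₀ : G) {ψ' : H →* kˣ}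
    (hψ' : ∀ h h' : H, (h' : G) = σ₀ * h * σ₀⁻¹ → ψ' h = ψ h') (f : IndSpace H ψ) (x : G) :
    (translate hH σ₀ hψ' f : G → k) x = (f : G → k) (σ₀ * x) :=
  rfl

open TensorProduct

variable (ψ) in
def tensorToProd (hH : H.index = 2) (σ₀ : G) {φ φ' : H →* kˣ}
    (hφ' : ∀ h h' : H, (h' : G) = σ₀ * h * σ₀⁻¹ → φ' h = φ h') :
    IndSpace H ψ ⊗[k] IndSpace H φ →ₗ[k] IndSpace H (ψ * φ) × IndSpace H (ψ * φ') :=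
  (lift (mulₗ ψ φ)).prod (lift ((mulₗ ψ φ').compl₂ (translate hH σ₀ hφ')))

@[simp]
theorem tensorToProd_tmul (hH : H.index = 2) (σ₀ : G) {φ φ' : H →* kˣ}
    (hφ' : ∀ h h' : H, (h' : G) = σ₀ * h * σ₀⁻¹ → φ' h = φ h')
    (f : IndSpace H ψ) (f' : IndSpace H φ) :
    tensorToProd ψ hH σ₀ hφ' (f ⊗ₜ f') = (mulₗ ψ φ f f', mulₗ ψ φ' f (translate hH σ₀ hφ' f')) :=
  rfl

theorem tensorToProd_comp_tprod (hH : H.index = 2) (σ₀ : G) {φ φ' : H →* kˣ}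
    (hφ' : ∀ h h' : H, (h' : G) = σ₀ * h * σ₀⁻¹ → φ' h = φ h') (g : G) :
    tensorToProd ψ hH σ₀ hφ' ∘ₗ (IndRep H ψ).tprod (IndRep H φ) g =
      ((IndRep H (ψ * φ)) g).prodMap ((IndRep H (ψ * φ')) g) ∘ₗ tensorToProd ψ hH σ₀ hφ' := by
  refine TensorProduct.ext' fun f f' => Prod.ext ?_ (Subtype.ext <| funext fun x => ?_)
  · rfl
  · show (f : G → k) (x * g) * (f' : G → k) (σ₀ * x * g) =
      (f : G → k) (x * g) * (f' : G → k) (σ₀ * (x * g))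
    rw [mul_assoc]

variable (ψ) in
noncomputable def prodToTensor (hH : H.index = 2) {σ₀ : G} (hσ₀ : σ₀ ∉ H) (φ φ' : H →* kˣ) :
    IndSpace H (ψ * φ) × IndSpace H (ψ * φ') →ₗ[k] IndSpace H ψ ⊗[k] IndSpace H φ :=
  (evalₗ _ 1 ∘ₗ LinearMap.fst k _ _).smulRight
      (ofValues ψ hH hσ₀ 1 0 ⊗ₜ ofValues φ hH hσ₀ 1 0) +
    (evalₗ _ σ₀ ∘ₗ LinearMap.fst k _ _).smulRight
      (ofValues ψ hH hσ₀ 0 1 ⊗ₜ ofValues φ hH hσ₀ 0 1) +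
    (evalₗ _ 1 ∘ₗ LinearMap.snd k _ _).smulRight
      (ofValues ψ hH hσ₀ 1 0 ⊗ₜ ofValues φ hH hσ₀ 0 1) +
    -- `f ⊗ f'` contributes `f σ₀ * f' (σ₀ * σ₀) = φ (σ₀ * σ₀) * f σ₀ * f' 1` to this coordinate
    (evalₗ _ σ₀ ∘ₗ LinearMap.snd k _ _).smulRight
      ((φ ⟨σ₀ * σ₀, H.mul_self_mem_of_index_two hH σ₀⟩ : k)⁻¹ •
        ofValues ψ hH hσ₀ 0 1 ⊗ₜ ofValues φ hH hσ₀ 1 0)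

theorem prodToTensor_apply (hH : H.index = 2) {σ₀ : G} (hσ₀ : σ₀ ∉ H) {φ φ' : H →* kˣ}
    (u : IndSpace H (ψ * φ)) (v : IndSpace H (ψ * φ')) :
    prodToTensor ψ hH hσ₀ φ φ' (u, v) =
      (u : G → k) 1 • ofValues ψ hH hσ₀ 1 0 ⊗ₜ ofValues φ hH hσ₀ 1 0 +
      (u : G → k) σ₀ • ofValues ψ hH hσ₀ 0 1 ⊗ₜ ofValues φ hH hσ₀ 0 1 +
      (v : G → k) 1 • ofValues ψ hH hσ₀ 1 0 ⊗ₜ ofValues φ hH hσ₀ 0 1 +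
      (v : G → k) σ₀ • (φ ⟨σ₀ * σ₀, H.mul_self_mem_of_index_two hH σ₀⟩ : k)⁻¹ •
        ofValues ψ hH hσ₀ 0 1 ⊗ₜ ofValues φ hH hσ₀ 1 0 :=
  rfl

theorem tensorToProd_comp_prodToTensor (hH : H.index = 2) {σ₀ : G} (hσ₀ : σ₀ ∉ H)
    {φ φ' : H →* kˣ} (hφ' : ∀ h h' : H, (h' : G) = σ₀ * h * σ₀⁻¹ → φ' h = φ h') :
    tensorToProd ψ hH σ₀ hφ' ∘ₗ prodToTensor ψ hH hσ₀ φ φ' = LinearMap.id := by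
  refine LinearMap.ext fun ⟨u, v⟩ => ?_
  refine Prod.ext (ext_of_index_two hH hσ₀ ?_ ?_) (ext_of_index_two hH hσ₀ ?_ ?_) <;>
    simp [prodToTensor_apply, ofValues_apply_one, ofValues_apply_self, apply_mul_self hH σ₀]

theorem prodToTensor_comp_tensorToProd (hH : H.index = 2) {σ₀ : G} (hσ₀ : σ₀ ∉ H)
    {φ φ' : H →* kˣ} (hφ' : ∀ h h' : H, (h' : G) = σ₀ * h * σ₀⁻¹ → φ' h = φ h') :
    prodToTensor ψ hH hσ₀ φ φ' ∘ₗ tensorToProd ψ hH σ₀ hφ' = LinearMap.id := by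
  refine TensorProduct.ext' fun f f' => ?_
  conv_rhs => rw [LinearMap.id_apply, eq_ofValues_add hH hσ₀ f, eq_ofValues_add hH hσ₀ f']
  rw [LinearMap.comp_apply, tensorToProd_tmul, prodToTensor_apply]
  simp only [coe_mulₗ, coe_translate, mul_one, apply_mul_self hH σ₀ f', tmul_add, add_tmul,
    smul_tmul_smul]
  match_scalars <;> field_simp

variable (ψ) in
noncomputable def tensorEquivProd (hH : H.index = 2) {σ₀ : G} (hσ₀ : σ₀ ∉ H)
    {φ φ' : H →* kˣ} (hφ' : ∀ h h' : H, (h' : G) = σ₀ * h * σ₀⁻¹ → φ' h = φ h') :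
    IndSpace H ψ ⊗[k] IndSpace H φ ≃ₗ[k] IndSpace H (ψ * φ) × IndSpace H (ψ * φ') :=
  .ofLinearMap (tensorToProd ψ hH σ₀ hφ') (prodToTensor ψ hH hσ₀ φ φ')
    (tensorToProd_comp_prodToTensor hH hσ₀ hφ') (prodToTensor_comp_tensorToProd hH hσ₀ hφ')

end IndSpace

theorem ind_tensor_ind_iso_of_index_two_general
    {k G : Type*} [Field k] [Group G]
    (H : Subgroup G) (hH : H.index = 2)
    (σ₀ : G) (hσ₀ : σ₀ ∉ H)
    (ψ φ φ' : H →* kˣ)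
    (hφ' : ∀ h h' : H, (h' : G) = σ₀ * h * σ₀⁻¹ → φ' h = φ h') :
    ∃ e : (IndSpace H ψ ⊗[k] IndSpace H φ) ≃ₗ[k]
        (IndSpace H (ψ * φ) × IndSpace H (ψ * φ')),
      ∀ (g : G) (x : IndSpace H ψ ⊗[k] IndSpace H φ),
        e (((IndRep H ψ).tprod (IndRep H φ)) g x) =
          ((IndRep H (ψ * φ)) g (e x).1, (IndRep H (ψ * φ')) g (e x).2) :=
  ⟨IndSpace.tensorEquivProd ψ hH hσ₀ hφ', fun g x =>
    LinearMap.congr_fun (IndSpace.tensorToProd_comp_tprod hH σ₀ hφ' g) x⟩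

/-- For a subgroup `H ≤ G` of index 2, one-dimensional characters
`ψ, φ` of `H` over a field of characteristic zero, and conjugate characters
`ψ'(σ) = ψ(σ₀σσ₀⁻¹)`, `φ'(σ) = φ(σ₀σσ₀⁻¹)` for a fixed `σ₀ ∈ G \ H`, there is a
`G`-equivariant isomorphism `Ind_H^G(ψ) ⊗ Ind_H^G(φ) ≅ Ind_H^G(ψφ) ⊕ Ind_H^G(ψφ')`. -/
theorem ind_tensor_ind_iso_of_index_two
    {k G : Type*} [Field k] [CharZero k] [Group G]
    (H : Subgroup G) (hH : H.index = 2)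
    (σ₀ : G) (hσ₀ : σ₀ ∉ H)
    (ψ φ ψ' φ' : H →* kˣ)
    (hψ' : ∀ h h' : H, (h' : G) = σ₀ * h * σ₀⁻¹ → ψ' h = ψ h')
    (hφ' : ∀ h h' : H, (h' : G) = σ₀ * h * σ₀⁻¹ → φ' h = φ h') :
    ∃ e : (IndSpace H ψ ⊗[k] IndSpace H φ) ≃ₗ[k]
        (IndSpace H (ψ * φ) × IndSpace H (ψ * φ')),
      ∀ (g : G) (x : IndSpace H ψ ⊗[k] IndSpace H φ),
        e (((IndRep H ψ).tprod (IndRep H φ)) g x) =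
          ((IndRep H (ψ * φ)) g (e x).1, (IndRep H (ψ * φ')) g (e x).2) :=
  ind_tensor_ind_iso_of_index_two_general H hH σ₀ hσ₀ ψ φ φ' hφ'
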